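/- arXiv:1305.2720 — 5 statements merged into one kernel-verified Lean document; each statement's English description precedes it below -/
import Mathlib

section
/- Let N be a normal subgroup of a finite group G. Then d(G) ≤ d(N)·d(G/N), where d denotes the commuting probability; equivalently, k(G)·|N|·|G/N| ≤ k(N)·k(G/N)·|G|. -/
/-!
Count the commuting pairs of `G` fibrewise over their images, which are commuting pairs of
`G ⧸ N`. For fixed `x`, the `y` in a coset `bN` commuting with `x` are empty or a coset of
`C_G(x) ∩ N`, so there are at most as many as in `N` itself. Applying this to the second
coordinate, then (after swapping) to the first, shows that each fibre is no larger than the set of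
commuting pairs of `N`.
-/

open Finset

section

open scoped Classical

theorem Finset.card_filter_prod_le_of_fiberwise_le {α β : Type*} [Fintype α] [Fintype β]
    (P : α → Prop) (R S : α → β → Prop) [DecidablePred P] [∀ a, DecidablePred (R a)]
    [∀ a, DecidablePred (S a)] (h : ∀ a, P a → #{b | R a b} ≤ #{b | S a b}) :
    #{p : α × β | P p.1 ∧ R p.1 p.2} ≤ #{p : α × β | P p.1 ∧ S p.1 p.2} := by
  simp only [card_filter, Fintype.sum_prod_type] at h ⊢
  refine sum_le_sum fun a _ => ?_
  by_cases ha : P a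
  · simpa only [ha, true_and] using h a ha
  · simp only [ha, false_and, if_false, le_refl]

variable {G : Type*} [Group G] [Fintype G]

theorem card_centralizer_inter_coset_le (H : Subgroup G) (x : G) (b : G ⧸ H) :
    #{y : G | (y : G ⧸ H) = b ∧ Commute x y} ≤ #{y : G | y ∈ H ∧ Commute x y} := by
  by_cases hb : ∃ y₀ : G, (y₀ : G ⧸ H) = b ∧ Commute x y₀
  · obtain ⟨y₀, rfl, hxy₀⟩ := hb
    refine card_le_card_of_injOn (y₀⁻¹ * ·) (fun y hy => ?_) fun y _ z _ h => mul_left_cancel h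
    simp only [coe_filter, mem_univ, true_and, Set.mem_ofPred_eq] at hy ⊢
    exact ⟨QuotientGroup.eq.mp hy.1.symm, hxy₀.inv_right.mul_right hy.2⟩
  · simp only [not_exists, not_and] at hb
    rw [filter_false_of_mem fun y _ hy => hb y hy.1 hy.2, card_empty]
    exact Nat.zero_le _

theorem card_filter_commute_swap (P Q : G → Prop) [DecidablePred P] [DecidablePred Q] :
    #{p : G × G | P p.1 ∧ Q p.2 ∧ Commute p.1 p.2} =
      #{p : G × G | Q p.1 ∧ P p.2 ∧ Commute p.1 p.2} :=
  card_nbij' Prod.swap Prod.swap (fun p hp => by simp_all [Commute.symm_iff])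
    (fun p hp => by simp_all [Commute.symm_iff]) (fun p _ => rfl) (fun p _ => rfl)

theorem card_commuting_pairs_in_cosets_le (H : Subgroup G) (a b : G ⧸ H) :
    #{p : G × G | (p.1 : G ⧸ H) = a ∧ (p.2 : G ⧸ H) = b ∧ Commute p.1 p.2} ≤
      #{p : G × G | p.1 ∈ H ∧ p.2 ∈ H ∧ Commute p.1 p.2} :=
  calc _ ≤ #{p : G × G | (p.1 : G ⧸ H) = a ∧ p.2 ∈ H ∧ Commute p.1 p.2} :=
        card_filter_prod_le_of_fiberwise_le (fun x : G => (x : G ⧸ H) = a)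
          (fun x y : G => (y : G ⧸ H) = b ∧ Commute x y) _
          fun x _ => card_centralizer_inter_coset_le H x b
    _ = #{p : G × G | p.1 ∈ H ∧ (p.2 : G ⧸ H) = a ∧ Commute p.1 p.2} :=
        card_filter_commute_swap (fun x : G => (x : G ⧸ H) = a) (· ∈ H)
    _ ≤ #{p : G × G | p.1 ∈ H ∧ p.2 ∈ H ∧ Commute p.1 p.2} :=
        card_filter_prod_le_of_fiberwise_le (· ∈ H)
          (fun x y : G => (y : G ⧸ H) = a ∧ Commute x y) _
          fun x _ => card_centralizer_inter_coset_le H x a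

theorem Subgroup.card_commute_eq_card_filter (H : Subgroup G) :
    Nat.card {p : H × H // Commute p.1 p.2} =
      #{p : G × G | p.1 ∈ H ∧ p.2 ∈ H ∧ Commute p.1 p.2} := by
  rw [← Fintype.card_subtype, ← Nat.card_eq_fintype_card]
  exact Nat.card_congr
    { toFun := fun p => ⟨(p.1.1, p.1.2), p.1.1.2, p.1.2.2, congrArg Subtype.val p.2⟩
      invFun := fun p => ⟨(⟨p.1.1, p.2.1⟩, ⟨p.1.2, p.2.2.1⟩), Subtype.ext p.2.2.2⟩ }

theorem card_commute_le_card_commute_mul_card_commute_quotient (N : Subgroup G) [N.Normal] :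
    Nat.card {p : G × G // Commute p.1 p.2} ≤
      Nat.card {p : N × N // Commute p.1 p.2} *
        Nat.card {p : (G ⧸ N) × (G ⧸ N) // Commute p.1 p.2} := by
  simp only [N.card_commute_eq_card_filter, Nat.card_eq_fintype_card, Fintype.card_subtype]
  refine card_le_mul_card_image_of_maps_to (f := Prod.map (↑) (↑))
    (by simpa using fun x y h => h.map (QuotientGroup.mk' N)) _ fun q _ => ?_
  convert card_commuting_pairs_in_cosets_le N q.1 q.2 using 2
  ext p
  simp only [mem_filter, mem_univ, true_and, Prod.ext_iff, Prod.map_fst, Prod.map_snd]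
  tauto

end

/-- For a normal subgroup `N` of a finite group `G`, the commuting probability of `G` is at
most the product of the commuting probabilities of `N` and of `G/N`. -/
theorem commProb_le_commProb_mul_commProb_quotient (G : Type*) [Group G] [Fintype G]
    (N : Subgroup G) [N.Normal] :
    commProb G ≤ commProb N * commProb (G ⧸ N) := by
  rw [commProb_def, commProb_def, commProb_def, div_mul_div_comm, ← Nat.cast_mul, ← mul_pow,
    ← Nat.cast_mul, N.card_eq_card_quotient_mul_card_subgroup, mul_comm (Nat.card (G ⧸ N))]
  gcongr
  exact_mod_cast card_commute_le_card_commute_mul_card_commute_quotient N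
end

section
/- Let q ≥ 4 be an even prime power and let G = PSL(2,q) be the projective special linear group of degree 2 over the field with q elements. Then d(G) = 1/((q−1)q), and d(G) < 3/p² for every prime p dividing |G|. -/
open Matrix
set_option linter.unusedSectionVars false
set_option maxHeartbeats 1000000

namespace PSLAux

variable {F : Type*} [Field F] [Fintype F] [CharP F 2]

local notation "SL" => Matrix.SpecialLinearGroup (Fin 2) F

lemma two_eq_zero : (2 : F) = 0 := by exact_mod_cast CharP.cast_eq_zero F 2

lemma sq_surj : Function.Surjective (fun a : F => a * a) := by
  have h2 : (2 : F) = 0 := two_eq_zero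
  have hinj : Function.Injective (fun a : F => a * a) := by
    intro a b h
    simp only at h
    have hsq : (a - b) * (a - b) = 0 := by linear_combination h + (b*b - a*b)*h2
    exact sub_eq_zero.mp (mul_self_eq_zero.mp hsq)
  exact Finite.surjective_of_injective hinj

lemma sq_inj {a b : F} (h : a * a = b * b) : a = b := by
  have h2 : (2 : F) = 0 := two_eq_zero
  have hsq : (a - b) * (a - b) = 0 := by linear_combination h + (b*b - a*b)*h2
  exact sub_eq_zero.mp (mul_self_eq_zero.mp hsq)

def C (t : F) : SL :=
  ⟨!![0, 1; 1, t], by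
    simp [Matrix.det_fin_two_of]
    linear_combination -two_eq_zero (F := F)⟩

lemma conj_aux (A : SL) (hA : A ≠ 1) :
    ∃ P : Matrix (Fin 2) (Fin 2) F, P.det ≠ 0 ∧
      (A : Matrix (Fin 2) (Fin 2) F) * P =
        P * !![0, 1; 1, Matrix.trace (A : Matrix (Fin 2) (Fin 2) F)] := by
  have h2 : (2 : F) = 0 := two_eq_zero
  obtain ⟨a, b, c, d, hM⟩ : ∃ a b c d, (A : Matrix (Fin 2) (Fin 2) F) = !![a, b; c, d] :=
    ⟨_, _, _, _, Matrix.eta_fin_two _⟩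
  have hdet : a * d - b * c = 1 := by
    have := A.prop
    rwa [hM, Matrix.det_fin_two_of] at this
  have htr : Matrix.trace (A : Matrix (Fin 2) (Fin 2) F) = a + d := by
    rw [hM, Matrix.trace_fin_two_of]
  rw [htr, hM]
  by_cases hc : c ≠ 0
  · refine ⟨!![1, a; 0, c], by simp [Matrix.det_fin_two_of, hc], ?_⟩
    ext i j
    fin_cases i <;> fin_cases j <;> simp [Matrix.mul_apply, Fin.sum_univ_two]
    all_goals try ring
    all_goals try linear_combination -hdet - h2
    all_goals try linear_combination hdet + h2
    all_goals try linear_combination h2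
    all_goals try linear_combination -h2
  · push_neg at hc
    by_cases hb : b ≠ 0
    · refine ⟨!![0, b; 1, d], by simp [Matrix.det_fin_two_of, hb], ?_⟩
      rw [hc]
      ext i j
      fin_cases i <;> fin_cases j <;> simp [Matrix.mul_apply, Fin.sum_univ_two]
      all_goals try ring
      all_goals try linear_combination -hdet - h2
      all_goals try linear_combination hdet + h2
      all_goals try linear_combination h2
      all_goals try linear_combination -h2
      all_goals try linear_combination -hdet - h2 - b*hc
    · push_neg at hb
      have had : a ≠ d := by
        intro had
        apply hA
        have ha1 : a = 1 := sq_inj (by linear_combination hdet + b*hc + a*had)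
        have hd1 : d = 1 := by rw [← had, ha1]
        apply Subtype.ext
        rw [hM, hb, hc, ha1, hd1]
        simp [Matrix.one_fin_two]
      refine ⟨!![1, a; 1, d], ?_, ?_⟩
      · simp [Matrix.det_fin_two_of]
        intro h
        exact had (by linear_combination -h)
      · rw [hb, hc]
        ext i j
        fin_cases i <;> fin_cases j <;> simp [Matrix.mul_apply, Fin.sum_univ_two]
        all_goals try ring
        all_goals try linear_combination -hdet - h2
        all_goals try linear_combination hdet + h2
        all_goals try linear_combination h2
        all_goals try linear_combination -h2
        all_goals try linear_combination -hdet - h2 - b*hc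

end PSLAux

namespace PSLAux2
open PSLAux

variable {F : Type*} [Field F] [Fintype F] [CharP F 2]

local notation "SL" => Matrix.SpecialLinearGroup (Fin 2) F

lemma isConj_C (A : SL) (hA : A ≠ 1) :
    IsConj (C (Matrix.trace ((A : Matrix (Fin 2) (Fin 2) F)))) A := by
  obtain ⟨P, hPdet, hPC⟩ := conj_aux A hA
  obtain ⟨s, hs⟩ := sq_surj (F := F) (P.det)⁻¹
  simp only at hs
  have hgdet : (s • P).det = 1 := by
    rw [Matrix.det_smul, Fintype.card_fin, pow_two, hs]
    field_simp
  set g : SL := ⟨s • P, hgdet⟩ with hg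
  have hcomm : g * C (Matrix.trace ((A : Matrix (Fin 2) (Fin 2) F))) = A * g := by
    apply Subtype.ext
    show (s • P) * !![0, 1; 1, _] = (A : Matrix (Fin 2) (Fin 2) F) * (s • P)
    rw [Matrix.smul_mul, Matrix.mul_smul, hPC]
  exact isConj_iff.mpr ⟨g, by rw [hcomm, mul_inv_cancel_right]⟩

lemma C_ne_one (t : F) : C t ≠ 1 := by
  intro h
  have := congrArg (fun A : SL => (A : Matrix (Fin 2) (Fin 2) F) 0 0) h
  simp [C] at this

lemma trace_C (t : F) : Matrix.trace ((C t : SL) : Matrix (Fin 2) (Fin 2) F) = t := by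
  simp [C, Matrix.trace_fin_two]

lemma trace_isConj {A B : SL} (h : IsConj A B) :
    Matrix.trace ((A : Matrix (Fin 2) (Fin 2) F)) =
      Matrix.trace ((B : Matrix (Fin 2) (Fin 2) F)) := by
  obtain ⟨g, hg⟩ := isConj_iff.mp h
  have hmat : (g : Matrix (Fin 2) (Fin 2) F) * (A : Matrix (Fin 2) (Fin 2) F) *
      ((g⁻¹ : SL) : Matrix (Fin 2) (Fin 2) F) = (B : Matrix (Fin 2) (Fin 2) F) := by
    rw [← Matrix.SpecialLinearGroup.coe_mul, ← Matrix.SpecialLinearGroup.coe_mul, hg]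
  have hinv : ((g⁻¹ : SL) : Matrix (Fin 2) (Fin 2) F) * (g : Matrix (Fin 2) (Fin 2) F) = 1 := by
    rw [← Matrix.SpecialLinearGroup.coe_mul, inv_mul_cancel]
    rfl
  calc Matrix.trace ((A : Matrix (Fin 2) (Fin 2) F))
      = Matrix.trace (((g⁻¹ : SL) : Matrix (Fin 2) (Fin 2) F) *
          ((g : Matrix (Fin 2) (Fin 2) F) * (A : Matrix (Fin 2) (Fin 2) F))) := by
        rw [← mul_assoc, hinv, one_mul]
    _ = Matrix.trace ((g : Matrix (Fin 2) (Fin 2) F) * (A : Matrix (Fin 2) (Fin 2) F) *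
          ((g⁻¹ : SL) : Matrix (Fin 2) (Fin 2) F)) := by
        rw [Matrix.trace_mul_comm]
    _ = _ := by rw [hmat]

lemma card_conjClasses_SL :
    Nat.card (ConjClasses SL) = Fintype.card F + 1 := by
  have e : Option F ≃ ConjClasses SL := by
    refine Equiv.ofBijective
      (fun o => Option.rec (ConjClasses.mk (1 : SL)) (fun t => ConjClasses.mk (C t)) o) ⟨?_, ?_⟩
    · rintro (_ | t) (_ | u) h <;> simp only [ConjClasses.mk_eq_mk_iff_isConj] at h
      · rfl
      · exact absurd (isConj_one_right.mp h) (C_ne_one u)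
      · exact absurd (isConj_one_left.mp h) (C_ne_one t)
      · have := trace_isConj h
        rw [trace_C, trace_C] at this
        rw [this]
    · intro x
      obtain ⟨A, rfl⟩ := ConjClasses.mk_surjective x
      by_cases hA : A = 1
      · exact ⟨none, by simp [hA]⟩
      · exact ⟨some (Matrix.trace ((A : Matrix (Fin 2) (Fin 2) F))),
          ConjClasses.mk_eq_mk_iff_isConj.mpr (isConj_C A hA)⟩
  rw [← Nat.card_congr e, Nat.card_eq_fintype_card, Fintype.card_option]

end PSLAux2
section CommProbCongr

lemma commProb_congr {G H : Type*} [Group G] [Group H] (e : G ≃* H) :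
    commProb G = commProb H := by
  rw [commProb_def, commProb_def, Nat.card_congr e.toEquiv]
  congr 1
  refine congrArg _ (Nat.card_congr ?_)
  exact
    { toFun := fun p => ⟨(e p.1.1, e p.1.2), p.2.map e.toMonoidHom⟩
      invFun := fun p => ⟨(e.symm p.1.1, e.symm p.1.2), p.2.map e.symm.toMonoidHom⟩
      left_inv := fun p => by simp
      right_inv := fun p => by simp }

end CommProbCongr

namespace PSLAux3

lemma sq_inj {F : Type*} [Field F] [CharP F 2] {a b : F} (h : a * a = b * b) : a = b := by
  have h2 : (2 : F) = 0 := by exact_mod_cast CharP.cast_eq_zero F 2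
  have hsq : (a - b) * (a - b) = 0 := by linear_combination h + (b*b - a*b)*h2
  exact sub_eq_zero.mp (mul_self_eq_zero.mp hsq)

variable {F : Type*} [Field F] [Fintype F] [CharP F 2]

local notation "SL" => Matrix.SpecialLinearGroup (Fin 2) F
local notation "GL2" => Matrix.GeneralLinearGroup (Fin 2) F

lemma det_surj : Function.Surjective (Matrix.GeneralLinearGroup.det : GL2 →* Fˣ) := by
  intro u
  refine ⟨⟨!![(u : F), 0; 0, 1], !![((u⁻¹ : Fˣ) : F), 0; 0, 1], ?_, ?_⟩, ?_⟩
  · ext i j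
    fin_cases i <;> fin_cases j <;> simp [Matrix.mul_apply, Fin.sum_univ_two]
  · ext i j
    fin_cases i <;> fin_cases j <;> simp [Matrix.mul_apply, Fin.sum_univ_two]
  · ext
    simp [Matrix.GeneralLinearGroup.val_det_apply, Matrix.det_fin_two_of]

def slEquivKer : SL ≃ (Matrix.GeneralLinearGroup.det : GL2 →* Fˣ).ker where
  toFun A := ⟨Matrix.SpecialLinearGroup.toGL A, by
    simp [MonoidHom.mem_ker]⟩
  invFun g := ⟨((g : GL2) : Matrix (Fin 2) (Fin 2) F), by
    have := g.2
    rw [MonoidHom.mem_ker] at this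
    have := congrArg (Units.val) this
    simpa [Matrix.GeneralLinearGroup.val_det_apply] using this⟩
  left_inv A := by apply Subtype.ext; rfl
  right_inv g := by
    apply Subtype.ext
    apply Units.ext
    rfl

lemma card_SL : Nat.card SL = (Fintype.card F ^ 2 - 1) * Fintype.card F := by
  set q := Fintype.card F with hq
  have hq2 : 2 ≤ q := Fintype.one_lt_card
  have hGL : Nat.card GL2 = (q ^ 2 - 1) * (q ^ 2 - q) := by
    rw [Matrix.card_GL_field, Fin.prod_univ_two]
    simp [hq]
  have hker := Subgroup.card_eq_card_quotient_mul_card_subgroup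
    (Matrix.GeneralLinearGroup.det : GL2 →* Fˣ).ker
  rw [Nat.card_congr (QuotientGroup.quotientKerEquivOfSurjective _ det_surj).toEquiv,
    ← Nat.card_congr (slEquivKer (F := F))] at hker
  have hu : Nat.card Fˣ = q - 1 := by
    rw [Nat.card_units, Nat.card_eq_fintype_card]
  rw [hGL, hu] at hker
  have hfac : (q ^ 2 - 1) * (q ^ 2 - q) = ((q - 1) * ((q ^ 2 - 1) * q)) := by
    have h1 : 1 ≤ q := le_trans (by norm_num) hq2
    zify [Nat.one_le_two_pow, h1, Nat.le_self_pow two_ne_zero q, Nat.one_le_pow 2 q (by omega)]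
    ring
  rw [hfac] at hker
  have hq1 : 0 < q - 1 := by omega
  exact Nat.eq_of_mul_eq_mul_left hq1 (by linarith [hker])

lemma center_eq_bot : Subgroup.center SL = ⊥ := by
  rw [Subgroup.eq_bot_iff_forall]
  intro A hA
  obtain ⟨r, hr, hscalar⟩ := Matrix.SpecialLinearGroup.mem_center_iff.mp hA
  rw [Fintype.card_fin, pow_two] at hr
  have hr1 : r = 1 := sq_inj (by rw [hr, one_mul])
  apply Subtype.ext
  rw [← hscalar, hr1]
  simp

def pslEquivSL : Matrix.ProjectiveSpecialLinearGroup (Fin 2) F ≃* SL :=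
  (QuotientGroup.quotientMulEquivOfEq center_eq_bot).trans QuotientGroup.quotientBot

end PSLAux3

/-- For `q ≥ 4` an even prime power and `G = PSL(2,q)`, the commuting probability satisfies
`d(G) = 1/((q−1)q)` and `d(G) < 3/p²` for every prime `p` dividing `|G|`. -/
theorem commProb_PSL_two_even (q : ℕ) (hq : 4 ≤ q) (hq2 : Even q)
    (F : Type*) [Field F] [Fintype F] (hF : Fintype.card F = q) :
    commProb (Matrix.ProjectiveSpecialLinearGroup (Fin 2) F) =
      1 / (((q : ℚ) - 1) * q) ∧
    ∀ p : ℕ, p.Prime → p ∣ Nat.card (Matrix.ProjectiveSpecialLinearGroup (Fin 2) F) →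
      commProb (Matrix.ProjectiveSpecialLinearGroup (Fin 2) F) < 3 / (p : ℚ) ^ 2 := by
  haveI : CharP F 2 := by
    have hchar : ringChar F = 2 := (FiniteField.even_card_iff_char_two).mpr (by
      rw [hF, Nat.even_iff] at *; omega)
    have := ringChar.charP F
    rwa [hchar] at this
  have hcardSL : Nat.card (Matrix.SpecialLinearGroup (Fin 2) F) = (q ^ 2 - 1) * q := by
    rw [PSLAux3.card_SL, hF]
  have hcardPSL : Nat.card (Matrix.ProjectiveSpecialLinearGroup (Fin 2) F) = (q ^ 2 - 1) * q := by
    rw [Nat.card_congr (PSLAux3.pslEquivSL (F := F)).toEquiv, hcardSL]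
  have hqQ : (4 : ℚ) ≤ (q : ℚ) := by exact_mod_cast hq
  have h1 : commProb (Matrix.ProjectiveSpecialLinearGroup (Fin 2) F) =
      1 / (((q : ℚ) - 1) * q) := by
    rw [commProb_congr (PSLAux3.pslEquivSL (F := F)), commProb_def',
      PSLAux2.card_conjClasses_SL, hcardSL, hF]
    have hcast : (((q ^ 2 - 1) * q : ℕ) : ℚ) = ((q : ℚ) ^ 2 - 1) * q := by
      push_cast [Nat.cast_sub (Nat.one_le_pow 2 q (by omega))]
      ring
    rw [hcast]
    push_cast
    rw [show ((q : ℚ) ^ 2 - 1) = ((q : ℚ) + 1) * ((q : ℚ) - 1) by ring]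
    rw [div_eq_div_iff (by nlinarith) (by nlinarith)]
    ring
  refine ⟨h1, fun p hp hdvd => ?_⟩
  rw [hcardPSL] at hdvd
  have hple : p ≤ q + 1 := by
    have hfac : (q ^ 2 - 1) * q = (q + 1) * ((q - 1) * q) := by
      zify [show 1 ≤ q ^ 2 by nlinarith, show 1 ≤ q by omega]
      ring
    rw [hfac] at hdvd
    rcases hp.dvd_mul.mp hdvd with h | h
    · exact Nat.le_of_dvd (by omega) h
    · rcases hp.dvd_mul.mp h with h' | h'
      · exact le_trans (Nat.le_of_dvd (by omega) h') (by omega)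
      · exact le_trans (Nat.le_of_dvd (by omega) h') (by omega)
  have hppos : 0 < p := hp.pos
  have hpQ : (0 : ℚ) < (p : ℚ) := by exact_mod_cast hppos
  have hpleQ : (p : ℚ) ≤ (q : ℚ) + 1 := by exact_mod_cast hple
  rw [h1, div_lt_div_iff₀ (by nlinarith) (by positivity)]
  nlinarith [sq_nonneg ((q:ℚ) - 4), sq_nonneg ((p:ℚ))]
end

section
/- Let G and H be isoclinic finite groups. Then d(G) = d(H); that is, k(G)/|G| = k(H)/|H|, where k denotes the number of conjugacy classes. -/
open scoped commutatorElement

/-- Two groups `G` and `H` are isoclinic if there are isomorphisms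
`φ : G/Z(G) ≃* H/Z(H)` and `ψ : G' ≃* H'` such that whenever `φ(g₁Z(G)) = h₁Z(H)` and
`φ(g₂Z(G)) = h₂Z(H)`, one has `ψ(⁅g₁,g₂⁆) = ⁅h₁,h₂⁆`. -/
def Isoclinic (G : Type*) [Group G] (H : Type*) [Group H] : Prop :=
  ∃ (φ : G ⧸ Subgroup.center G ≃* H ⧸ Subgroup.center H)
    (ψ : ↥(commutator G) ≃* ↥(commutator H)),
    ∀ (g₁ g₂ : G) (h₁ h₂ : H),
      φ (g₁ : G ⧸ Subgroup.center G) = (h₁ : H ⧸ Subgroup.center H) →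
      φ (g₂ : G ⧸ Subgroup.center G) = (h₂ : H ⧸ Subgroup.center H) →
      ∀ hmem : ⁅g₁, g₂⁆ ∈ commutator G,
        (ψ ⟨⁅g₁, g₂⁆, hmem⟩ : H) = ⁅h₁, h₂⁆

/-! Whether two elements commute depends only on their cosets modulo the centre, so the commuting
pairs of `G` form the full preimage of a set `S_G` of pairs of cosets, every fibre having
`|Z(G)|²` elements; hence `d(G) = |S_G| / |G/Z(G)|²`. An isoclinism `(φ, ψ)` maps `S_G` onto
`S_H` under `φ × φ`, since commuting means a trivial commutator and `ψ` is injective. -/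

open Subgroup

section

variable {G : Type*} [Group G]

theorem commute_mul_left_iff_of_mem_center {z : G} (hz : z ∈ center G) (g x : G) :
    Commute (g * z) x ↔ Commute g x :=
  ⟨fun h => by simpa using h.mul_left (mem_center_iff.mp (inv_mem hz) x).symm,
    fun h => h.mul_left (mem_center_iff.mp hz x).symm⟩

theorem commute_mul_right_iff_of_mem_center {z : G} (hz : z ∈ center G) (x g : G) :
    Commute x (g * z) ↔ Commute x g := by
  rw [Commute.symm_iff, commute_mul_left_iff_of_mem_center hz, Commute.symm_iff]

theorem commute_iff_of_mk_eq_mk {a b a' b' : G} (ha : (a : G ⧸ center G) = a')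
    (hb : (b : G ⧸ center G) = b') : Commute a b ↔ Commute a' b' := by
  rw [QuotientGroup.eq] at ha hb
  rw [← mul_inv_cancel_left a a', ← mul_inv_cancel_left b b',
    commute_mul_left_iff_of_mem_center ha, commute_mul_right_iff_of_mem_center hb]

theorem commute_iff_commute_out (a b : G) :
    Commute a b ↔ Commute (a : G ⧸ center G).out (b : G ⧸ center G).out :=
  commute_iff_of_mk_eq_mk (QuotientGroup.out_eq' _).symm (QuotientGroup.out_eq' _).symm

theorem QuotientGroup.card_pairs_pred_mk (N : Subgroup G) (P : G ⧸ N → G ⧸ N → Prop) :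
    Nat.card {p : G × G // P p.1 p.2} =
      Nat.card {q : (G ⧸ N) × (G ⧸ N) // P q.1 q.2} * Nat.card N ^ 2 := by
  let e : G × G ≃ ((G ⧸ N) × (G ⧸ N)) × (N × N) :=
    (groupEquivQuotientProdSubgroup.prodCongr groupEquivQuotientProdSubgroup).trans
      (Equiv.prodProdProdComm _ _ _ _)
  -- `Iff.rfl`: the first component of `groupEquivQuotientProdSubgroup g` is the coset of `g`.
  have e' : {p : G × G // P p.1 p.2} ≃ {q : (G ⧸ N) × (G ⧸ N) // P q.1 q.2} × (N × N) :=
    (e.subtypeEquiv (q := fun x => P x.1.1 x.1.2) fun _ => Iff.rfl).trans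
      (Equiv.prodSubtypeFstEquivSubtypeProd (p := fun q : (G ⧸ N) × (G ⧸ N) => P q.1 q.2))
  rw [Nat.card_congr e', Nat.card_prod, Nat.card_prod, sq]

theorem commProb_eq_card_commute_out_div [Finite G] :
    commProb G = Nat.card {q : (G ⧸ center G) × (G ⧸ center G) // Commute q.1.out q.2.out} /
      (Nat.card (G ⧸ center G) : ℚ) ^ 2 := by
  have hZ : (Nat.card (center G) : ℚ) ≠ 0 := by exact_mod_cast Nat.card_pos.ne'
  rw [commProb_def,
    Nat.card_congr (Equiv.subtypeEquivRight fun p : G × G => commute_iff_commute_out p.1 p.2),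
    QuotientGroup.card_pairs_pred_mk (center G) fun a b => Commute a.out b.out,
    card_eq_card_quotient_mul_card_subgroup (center G)]
  push_cast
  field_simp

theorem Isoclinic.exists_commute_out_iff {H : Type*} [Group H] (h : Isoclinic G H) :
    ∃ φ : G ⧸ center G ≃* H ⧸ center H,
      ∀ a b, Commute a.out b.out ↔ Commute (φ a).out (φ b).out := by
  obtain ⟨φ, ψ, hψ⟩ := h
  refine ⟨φ, fun a b => ?_⟩
  have hmem : ⁅a.out, b.out⁆ ∈ commutator G :=
    commutator_mem_commutator (mem_top _) (mem_top _)
  rw [← commutatorElement_eq_one_iff_commute, ← commutatorElement_eq_one_iff_commute,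
    ← hψ a.out b.out (φ a).out (φ b).out (by simp) (by simp) hmem,
    OneMemClass.coe_eq_one, EmbeddingLike.map_eq_one_iff, mk_eq_one]

end

/-- Isoclinic finite groups have the same commuting probability:
`d(G) = k(G)/|G| = k(H)/|H| = d(H)`. -/
theorem commProb_eq_of_isoclinic (G : Type*) [Group G] [Fintype G]
    (H : Type*) [Group H] [Fintype H] (hiso : Isoclinic G H) :
    (Nat.card (ConjClasses G) : ℚ) / Nat.card G =
      (Nat.card (ConjClasses H) : ℚ) / Nat.card H := by
  obtain ⟨φ, hφ⟩ := hiso.exists_commute_out_iff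
  rw [← commProb_def', ← commProb_def', commProb_eq_card_commute_out_div,
    commProb_eq_card_commute_out_div, Nat.card_congr φ.toEquiv,
    Nat.card_congr ((φ.toEquiv.prodCongr φ.toEquiv).subtypeEquiv
      (q := fun q => Commute q.1.out q.2.out) fun q => hφ q.1 q.2)]
end

section
/- For every finite group G there exists a finite group H isoclinic to G such that |H| ≤ |G| and Z(H) ⊆ H' (the center of H is contained in its derived subgroup). -/
open scoped commutatorElement

/-!
Factor the natural map `Z(G) → Gᵃᵇ` as an injection `f : Z(G) → D` into an abelian group
followed by a surjection `θ : D → Gᵃᵇ` with `ker θ ≤ f (Z(G))`; this is possible because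
divisible abelian groups are injective `ℤ`-modules. Let `Y ≤ G × D` be the fibre product of
`G → Gᵃᵇ` and `θ`, and `H = Y ⧸ N` with `N = {(z, f z)}`, a central subgroup. Since `Y' ≤ G × 1`,
both `Y → G` and `Y → H` are surjections whose kernels meet `Y'` trivially, so `G`, `Y`, `H` are
isoclinic. A central element of `H` comes from some `(z, d)` with `z ∈ Z(G)`, and `d = f z * f a`
with `a ∈ Z(G) ∩ G'`; modulo `N` it is `(a⁻¹, 1) ∈ Y'`. Finally
`|H| = |G| * |ker θ| / |Z(G)| ≤ |G|`.
-/

universe u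

section Isoclinism

open Subgroup

variable {G H K : Type*} [Group G] [Group H] [Group K]

theorem commutatorElement_eq_of_mk_eq_mk {a b c d : G}
    (hab : (a : G ⧸ center G) = b) (hcd : (c : G ⧸ center G) = d) : ⁅a, c⁆ = ⁅b, d⁆ := by
  obtain ⟨z, hz, rfl⟩ : ∃ z ∈ center G, b = a * z := ⟨a⁻¹ * b, QuotientGroup.eq.mp hab, by group⟩
  obtain ⟨w, hw, rfl⟩ : ∃ w ∈ center G, d = c * w := ⟨c⁻¹ * d, QuotientGroup.eq.mp hcd, by group⟩
  rw [mem_center_iff] at hz hw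
  rw [commutatorElement_mul_left_eq_conj_mul, commutatorElement_mul_right_eq_mul_conj a,
    commutatorElement_eq_one_iff_commute.mpr (hz _).symm,
    commutatorElement_eq_one_iff_commute.mpr (hw a)]
  group

theorem map_commutator_of_surjective {f : G →* H} (hf : Function.Surjective f) :
    (commutator G).map f = commutator H := by
  rw [map_commutator_eq, MonoidHom.range_eq_top.mpr hf, commutator_def]

theorem comap_center_of_surjective {f : G →* H} (hf : Function.Surjective f)
    (hker : Disjoint f.ker (commutator G)) : (center H).comap f = center G := by
  ext x
  simp only [mem_comap, mem_center_iff]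
  constructor
  · intro hx y
    have hxy : ⁅y, x⁆ ∈ f.ker := by
      rw [MonoidHom.mem_ker, map_commutatorElement, commutatorElement_eq_one_iff_mul_comm, hx]
    exact commutatorElement_eq_one_iff_mul_comm.mp
      (disjoint_def.mp hker hxy (commutator_mem_commutator trivial trivial))
  · intro hx y
    obtain ⟨y, rfl⟩ := hf y
    rw [← map_mul, hx, map_mul]

theorem Isoclinic.of_surjective (f : G →* H) (hf : Function.Surjective f)
    (hker : Disjoint f.ker (commutator G)) : Isoclinic G H := by
  have hφ : ((QuotientGroup.mk' (center H)).comp f).ker = center G := by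
    rw [← MonoidHom.comap_ker, QuotientGroup.ker_mk', comap_center_of_surjective hf hker]
  let φ : G ⧸ center G ≃* H ⧸ center H :=
    (QuotientGroup.quotientMulEquivOfEq hφ.symm).trans
      (QuotientGroup.quotientKerEquivOfSurjective _ ((QuotientGroup.mk'_surjective _).comp hf))
  have hψ : Function.Bijective (f.subgroupMap (commutator G)) :=
    ⟨(injective_iff_map_eq_one _).mpr fun x hx =>
      Subtype.ext (disjoint_def.mp hker (congrArg Subtype.val hx) x.2), f.subgroupMap_surjective _⟩
  let ψ : commutator G ≃* commutator H := (MulEquiv.ofBijective _ hψ).trans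
    (MulEquiv.subgroupCongr (map_commutator_of_surjective hf))
  refine ⟨φ, ψ, fun g₁ g₂ h₁ h₂ e₁ e₂ hmem => ?_⟩
  change f ⁅g₁, g₂⁆ = ⁅h₁, h₂⁆
  rw [map_commutatorElement]
  exact commutatorElement_eq_of_mk_eq_mk e₁ e₂

theorem Isoclinic.of_mulEquiv (e : G ≃* H) : Isoclinic G H :=
  of_surjective e.toMonoidHom e.surjective <| by
    rw [(MonoidHom.ker_eq_bot_iff _).mpr e.injective]
    exact disjoint_bot_left

theorem Isoclinic.symm (h : Isoclinic G H) : Isoclinic H G := by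
  obtain ⟨φ, ψ, hc⟩ := h
  refine ⟨φ.symm, ψ.symm, fun h₁ h₂ g₁ g₂ e₁ e₂ hmem => ?_⟩
  rw [MulEquiv.symm_apply_eq] at e₁ e₂
  have := hc g₁ g₂ h₁ h₂ e₁.symm e₂.symm (commutator_mem_commutator trivial trivial)
  rw [(MulEquiv.symm_apply_eq ψ).mpr (Subtype.ext this.symm)]

theorem Isoclinic.trans (h₁ : Isoclinic G H) (h₂ : Isoclinic H K) : Isoclinic G K := by
  obtain ⟨φ₁, ψ₁, hc₁⟩ := h₁
  obtain ⟨φ₂, ψ₂, hc₂⟩ := h₂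
  refine ⟨φ₁.trans φ₂, ψ₁.trans ψ₂, fun g₁ g₂ k₁ k₂ e₁ e₂ hmem => ?_⟩
  obtain ⟨m₁, hm₁⟩ := QuotientGroup.mk_surjective (φ₁ g₁)
  obtain ⟨m₂, hm₂⟩ := QuotientGroup.mk_surjective (φ₁ g₂)
  have hψ₁ : ψ₁ ⟨⁅g₁, g₂⁆, hmem⟩ = ⟨⁅m₁, m₂⁆, commutator_mem_commutator trivial trivial⟩ :=
    Subtype.ext (hc₁ g₁ g₂ m₁ m₂ hm₁.symm hm₂.symm hmem)
  simp only [MulEquiv.trans_apply, hψ₁]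
  exact hc₂ m₁ m₂ k₁ k₂ (hm₁ ▸ e₁) (hm₂ ▸ e₂) _

end Isoclinism

section Quotient

open Subgroup

variable {G H : Type*} [Group G] [Group H]

theorem Subgroup.normal_of_le_center {N : Subgroup G} (hN : N ≤ center G) : N.Normal :=
  ⟨fun n hn g => by rwa [mem_center_iff.mp (hN hn) g, mul_inv_cancel_right]⟩

theorem Subgroup.card_quotient_le_of_card_ker_le {f : G →* H} (hf : Function.Surjective f)
    {N : Subgroup G} [Finite N] (h : Nat.card f.ker ≤ Nat.card N) :
    Nat.card (G ⧸ N) ≤ Nat.card H := by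
  have hG := card_eq_card_quotient_mul_card_subgroup f.ker
  rw [Nat.card_congr (QuotientGroup.quotientKerEquivOfSurjective f hf).toEquiv] at hG
  refine Nat.le_of_mul_le_mul_right ?_ (Nat.card_pos (α := N))
  calc Nat.card (G ⧸ N) * Nat.card N = Nat.card H * Nat.card f.ker := by
        rw [← card_eq_card_quotient_mul_card_subgroup, hG]
    _ ≤ Nat.card H * Nat.card N := Nat.mul_le_mul_left _ h

theorem QuotientGroup.center_le_commutator {N : Subgroup G} [N.Normal]
    (hN : Disjoint N (commutator G)) (h : center G ≤ N ⊔ commutator G) :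
    center (G ⧸ N) ≤ commutator (G ⧸ N) := by
  calc center (G ⧸ N) = (center G).map (mk' N) := by
        rw [← comap_center_of_surjective (mk'_surjective N) (by rwa [ker_mk']),
          map_comap_eq_self_of_surjective (mk'_surjective N)]
    _ ≤ (N ⊔ commutator G).map (mk' N) := map_mono h
    _ = commutator (G ⧸ N) := by
        rw [Subgroup.map_sup, map_mk'_self, bot_sup_eq,
          map_commutator_of_surjective (mk'_surjective N)]

end Quotient

theorem AddCommGroup.exists_injective_divisibleBy (A : Type u) [AddCommGroup A] :
    ∃ (E : Type u) (_ : AddCommGroup E) (_ : DivisibleBy E ℤ) (ι : A →+ E),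
      Function.Injective ι :=
  ⟨CharacterModule A → AddCircle (1 : ℚ), inferInstance, inferInstance,
    AddMonoidHom.mk' (fun a c => c a) fun a b => funext fun c => map_add c a b,
    (injective_iff_map_eq_zero _).mpr fun _ ha =>
      CharacterModule.eq_zero_of_character_apply fun c => congrFun ha c⟩

theorem AddMonoidHom.exists_injective_surjective_factorization {A M : Type u} [AddCommGroup A]
    [AddCommGroup M] (ρ : A →+ M) :
    ∃ (D : Type u) (_ : AddCommGroup D) (f : A →+ D) (θ : D →+ M),
      Function.Injective f ∧ Function.Surjective θ ∧ θ.comp f = ρ ∧ θ.ker ≤ f.range := by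
  obtain ⟨E, _, _, ι, hι⟩ := AddCommGroup.exists_injective_divisibleBy A
  let q := QuotientAddGroup.mk' (ρ.ker.map ι)
  let : DivisibleBy (E ⧸ ρ.ker.map ι) ℤ :=
    (QuotientAddGroup.mk'_surjective _).divisibleBy q fun _ _ => map_zsmul q _ _
  have hqι : ρ.ker ≤ (q.comp ι).ker := fun a ha => by
    simpa [q] using AddSubgroup.mem_map_of_mem ι ha
  obtain ⟨v, hv⟩ := (Module.Baer.of_divisible _).extension_property_addMonoidHom
    (QuotientAddGroup.kerLift ρ) (QuotientAddGroup.kerLift_injective ρ)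
    (QuotientAddGroup.lift ρ.ker (q.comp ι) hqι)
  have hvρ : ∀ a, v (ρ a) = q (ι a) := fun a => DFunLike.congr_fun hv (a : A ⧸ ρ.ker)
  let D := (q.comp (fst E M)).eqLocus (v.comp (snd E M))
  refine ⟨D, inferInstance, (ι.prod ρ).codRestrict D fun a => (hvρ a).symm,
    (snd E M).comp D.subtype, fun a b hab => hι congr(($hab : E × M).1), fun m => ?_, rfl, ?_⟩
  · obtain ⟨e, he⟩ := QuotientAddGroup.mk'_surjective _ (v m)
    exact ⟨⟨(e, m), he⟩, rfl⟩
  · rintro ⟨⟨e, m⟩, hem⟩ (rfl : m = 0)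
    obtain ⟨a, ha, rfl⟩ : e ∈ ρ.ker.map ι := by
      rw [← QuotientAddGroup.eq_zero_iff, ← map_zero v]
      exact hem
    exact ⟨a, Subtype.ext (Prod.ext rfl ha)⟩

theorem MonoidHom.exists_injective_surjective_factorization {A M : Type u} [CommGroup A]
    [CommGroup M] (ρ : A →* M) :
    ∃ (D : Type u) (_ : CommGroup D) (f : A →* D) (θ : D →* M),
      Function.Injective f ∧ Function.Surjective θ ∧ θ.comp f = ρ ∧ θ.ker ≤ f.range := by
  obtain ⟨D, _, f, θ, hf, hθ, hθf, hker⟩ :=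
    (MonoidHom.toAdditive ρ).exists_injective_surjective_factorization
  exact ⟨Multiplicative D, inferInstance, AddMonoidHom.toMultiplicativeRight f,
    AddMonoidHom.toMultiplicativeLeft θ, hf, hθ, congrArg AddMonoidHom.toMultiplicative hθf, hker⟩

section Product

open Subgroup

variable {G D : Type*} [Group G] [CommGroup D]

theorem Subgroup.snd_eq_one_of_mem_commutator {Y : Subgroup (G × D)} {y : Y}
    (hy : y ∈ _root_.commutator Y) : (y : G × D).2 = 1 :=
  Abelianization.commutator_subset_ker ((MonoidHom.snd G D).comp Y.subtype) hy

theorem Subgroup.disjoint_ker_fst_commutator (Y : Subgroup (G × D)) :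
    Disjoint ((MonoidHom.fst G D).comp Y.subtype).ker (_root_.commutator Y) :=
  disjoint_def.mpr fun hy₁ hy => Subtype.ext (Prod.ext hy₁ (snd_eq_one_of_mem_commutator hy))

theorem Subgroup.mem_commutator_of_fst_mem_commutator {Y : Subgroup (G × D)}
    (hY : Function.Surjective ((MonoidHom.fst G D).comp Y.subtype)) {y : Y}
    (hy : (y : G × D).1 ∈ _root_.commutator G) (hy₂ : (y : G × D).2 = 1) :
    y ∈ _root_.commutator Y := by
  rw [← map_commutator_of_surjective hY] at hy
  obtain ⟨c, hc, hcy⟩ := hy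
  rwa [show y = c from
    Subtype.ext (Prod.ext hcy.symm (hy₂.trans (snd_eq_one_of_mem_commutator hc).symm))]

end Product

namespace IsoclinicStem

open Subgroup

variable {G D : Type*} [Group G] [CommGroup D]

def pullback (θ : D →* Abelianization G) : Subgroup (G × D) :=
  (Abelianization.of.comp (MonoidHom.fst G D)).eqLocus (θ.comp (MonoidHom.snd G D))

variable {θ : D →* Abelianization G} {f : center G →* D}

theorem fst_comp_subtype_surjective (hθ : Function.Surjective θ) :
    Function.Surjective ((MonoidHom.fst G D).comp (pullback θ).subtype) := fun g => by
  obtain ⟨d, hd⟩ := hθ (Abelianization.of g)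
  exact ⟨⟨(g, d), hd.symm⟩, rfl⟩

def centerDiagonal (hθf : θ.comp f = Abelianization.of.comp (center G).subtype) :
    center G →* pullback θ :=
  ((center G).subtype.prod f).codRestrict _ fun z => (DFunLike.congr_fun hθf z).symm

variable (hθf : θ.comp f = Abelianization.of.comp (center G).subtype)

@[simp]
theorem coe_centerDiagonal (z : center G) : (centerDiagonal hθf z : G × D) = ((z : G), f z) := rfl

theorem centerDiagonal_injective : Function.Injective (centerDiagonal hθf) :=
  fun _ _ h => Subtype.ext congr(($h : G × D).1)

theorem range_centerDiagonal_le_center : (centerDiagonal hθf).range ≤ center (pullback θ) := by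
  rintro _ ⟨z, rfl⟩
  exact mem_center_iff.mpr fun y =>
    Subtype.ext (Prod.ext (mem_center_iff.mp z.2 _) (mul_comm _ (f z)))

theorem disjoint_range_centerDiagonal_commutator (hf : Function.Injective f) :
    Disjoint (centerDiagonal hθf).range (commutator (pullback θ)) := by
  refine disjoint_def.mpr ?_
  rintro _ ⟨z, rfl⟩ hz
  have : f z = 1 := snd_eq_one_of_mem_commutator hz
  rw [(injective_iff_map_eq_one f).mp hf z this, map_one]

theorem exists_injective_ker_fst (hf : Function.Injective f) (hker : θ.ker ≤ f.range) :
    ∃ κ : ((MonoidHom.fst G D).comp (pullback θ).subtype).ker → center G,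
      Function.Injective κ := by
  refine ⟨fun k => (MonoidHom.ofInjective hf).symm ⟨((k : pullback θ) : G × D).2, hker ?_⟩, ?_⟩
  · have hk : ((k : pullback θ) : G × D).1 = 1 := k.2
    have hθk : Abelianization.of ((k : pullback θ) : G × D).1 = θ ((k : pullback θ) : G × D).2 :=
      (k : pullback θ).2
    rw [MonoidHom.mem_ker, ← hθk, hk, map_one]
  · intro k₁ k₂ h
    have h₁ : ((k₁ : pullback θ) : G × D).1 = 1 := k₁.2
    have h₂ : ((k₂ : pullback θ) : G × D).1 = 1 := k₂.2
    exact Subtype.ext (Subtype.ext (Prod.ext (h₁.trans h₂.symm)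
      congr(($((MonoidHom.ofInjective hf).symm.injective h) : D))))

theorem finite_pullback [Finite G] (hf : Function.Injective f) (hθ : Function.Surjective θ)
    (hker : θ.ker ≤ f.range) : Finite (pullback θ) := by
  obtain ⟨κ, hκ⟩ := exists_injective_ker_fst hf hker
  have : Finite ((MonoidHom.fst G D).comp (pullback θ).subtype).ker := .of_injective κ hκ
  have := Finite.of_equiv G
    (QuotientGroup.quotientKerEquivOfSurjective _ (fst_comp_subtype_surjective hθ)).symm.toEquiv
  exact .of_subgroup_quotient ((MonoidHom.fst G D).comp (pullback θ).subtype).ker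

theorem card_ker_fst_le [Finite G] (hf : Function.Injective f) (hker : θ.ker ≤ f.range) :
    Nat.card ((MonoidHom.fst G D).comp (pullback θ).subtype).ker ≤
      Nat.card (centerDiagonal hθf).range := by
  obtain ⟨κ, hκ⟩ := exists_injective_ker_fst hf hker
  rw [← Nat.card_congr (MonoidHom.ofInjective (centerDiagonal_injective hθf)).toEquiv]
  exact Nat.card_le_card_of_injective κ hκ

theorem center_le_range_centerDiagonal_sup_commutator (hθ : Function.Surjective θ)
    (hker : θ.ker ≤ f.range) :
    center (pullback θ) ≤ (centerDiagonal hθf).range ⊔ commutator (pullback θ) := by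
  intro y hy
  have hsurj := fst_comp_subtype_surjective hθ
  have hz : (y : G × D).1 ∈ center G := by
    rwa [← comap_center_of_surjective hsurj (disjoint_ker_fst_commutator _)] at hy
  set z : center G := ⟨_, hz⟩
  have hθz : θ ((f z)⁻¹ * (y : G × D).2) = 1 := by
    rw [map_mul, map_inv, ← MonoidHom.comp_apply, hθf]
    exact inv_mul_eq_one.mpr y.2
  obtain ⟨a, ha⟩ := hker hθz
  have haG : (a : G)⁻¹ ∈ commutator G := by
    rw [← Abelianization.ker_of, MonoidHom.mem_ker, map_inv, inv_eq_one]
    change (Abelianization.of.comp (center G).subtype) a = 1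
    rwa [← hθf, MonoidHom.comp_apply, ha]
  let c : pullback θ := ⟨((a : G)⁻¹, 1), by
    change Abelianization.of _ = θ 1
    rw [map_one, ← MonoidHom.mem_ker, Abelianization.ker_of]
    exact haG⟩
  have hc : c ∈ commutator (pullback θ) := mem_commutator_of_fst_mem_commutator hsurj haG rfl
  have hy : y = centerDiagonal hθf (z * a) * c := by
    refine Subtype.ext (Prod.ext ?_ ?_)
    · simp [c, z]
    · simp [c, z, ha]
  rw [hy]
  exact mul_mem_sup ⟨_, rfl⟩ hc

end IsoclinicStem

open scoped IsMulCommutative in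
open Subgroup IsoclinicStem in
theorem exists_isoclinic_stem_of_finite (G : Type u) [Group G] [Finite G] :
    ∃ (H : Type u) (_ : Group H) (_ : Finite H),
      Isoclinic G H ∧ Nat.card H ≤ Nat.card G ∧ center H ≤ commutator H := by
  obtain ⟨D, _, f, θ, hf, hθ, hθf, hker⟩ :=
    (Abelianization.of.comp (center G).subtype).exists_injective_surjective_factorization
  let N := (centerDiagonal hθf).range
  have : N.Normal := normal_of_le_center (range_centerDiagonal_le_center hθf)
  have : Finite (pullback θ) := finite_pullback hf hθ hker
  have hN : Disjoint N (commutator (pullback θ)) :=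
    disjoint_range_centerDiagonal_commutator hθf hf
  have hfst := fst_comp_subtype_surjective hθ
  refine ⟨pullback θ ⧸ N, inferInstance, inferInstance,
    (Isoclinic.of_surjective _ hfst (disjoint_ker_fst_commutator _)).symm.trans
      (Isoclinic.of_surjective _ (QuotientGroup.mk'_surjective N) (by rwa [QuotientGroup.ker_mk'])),
    card_quotient_le_of_card_ker_le hfst (card_ker_fst_le hθf hf hker),
    QuotientGroup.center_le_commutator hN
      (center_le_range_centerDiagonal_sup_commutator hθf hθ hker)⟩

/-- Every finite group `G` is isoclinic to a finite group `H` with `|H| ≤ |G|` whose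
center is contained in its derived subgroup. -/
theorem exists_isoclinic_stem (G : Type*) [Group G] [Fintype G] :
    ∃ (H : Type) (_ : Group H) (_ : Fintype H),
      Isoclinic G H ∧ Nat.card H ≤ Nat.card G ∧ Subgroup.center H ≤ commutator H := by
  obtain ⟨H, _, _, hGH, hcard, hstem⟩ := exists_isoclinic_stem_of_finite (Shrink.{0} G)
  let e : G ≃* Shrink.{0} G := Shrink.mulEquiv.symm
  exact ⟨H, inferInstance, .ofFinite H, (Isoclinic.of_mulEquiv e).trans hGH,
    hcard.trans (Nat.card_congr e.toEquiv).ge, hstem⟩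
end

section
/- Let G be a finite group and let N be a normal subgroup of G that is contained in the derived subgroup G'. If T(G) > (1/2)·|G|, then T(G/N) > (1/2)·|G/N|. -/
/-!
Irreducible characters of `G/N` inflate injectively to irreducible characters of `G`, with the
same degrees. Every linear character of `G` kills `G' ⊇ N`, so it is such an inflation, and the
remaining irreducible characters of `G` have degree `d ≥ 2`, hence `d ≤ d² / 2`. Since
`∑ χ(1)² = |G|` for `G` and for `G/N`, this gives `T(G) - T(G/N) ≤ (|G| - |G/N|) / 2`, which
turns `T(G) > |G| / 2` into `T(G/N) > |G/N| / 2`.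

The formula `∑ χ(1)² = |G|` comes from writing the regular character as a sum of irreducible
characters (Maschke) and reading off the multiplicities `χ(1)` with the orthogonality relations.
Simplicity of a representation is always checked through the criterion `⟨χ, χ⟩ = 1`.
-/

open CategoryTheory

/-- `χ : G → ℂ` is an irreducible complex character of the group `G`, i.e. the character of
an irreducible (simple) finite-dimensional complex representation of `G`. -/
def IsIrrChar (G : Type) [Group G] (χ : G → ℂ) : Prop :=
  ∃ V : FDRep ℂ G, Simple V ∧ χ = FDRep.character V

/-- `charDegSum G` is `T(G)`, the sum of the degrees `χ(1)` of the irreducible complex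
characters of `G`. -/
noncomputable def charDegSum (G : Type) [Group G] : ℝ :=
  ∑ᶠ χ ∈ {χ : G → ℂ | IsIrrChar G χ}, (χ 1).re

open Module

theorem MonoidHom.sum_comp_of_surjective {G H M : Type*} [Group G] [Group H] [Fintype G]
    [Fintype H] [AddCommMonoid M] (f : G →* H) (hf : Function.Surjective f) (φ : H → M) :
    ∑ g, φ (f g) = Nat.card f.ker • ∑ h, φ h := by
  classical
  rw [← Fintype.sum_fiberwise f, Finset.smul_sum]
  refine Fintype.sum_congr _ _ fun h => ?_
  calc ∑ g : {g // f g = h}, φ (f g) = ∑ _ : {g // f g = h}, φ h :=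
        Fintype.sum_congr _ _ fun g => congrArg φ g.2
    _ = Nat.card f.ker • φ h := by
        rw [Finset.sum_const, Finset.card_univ, Fintype.card_eq_nat_card]
        exact congrArg (· • φ h) (Nat.card_congr (f.fiberEquivKerOfSurjective hf h))

theorem LinearMap.trace_mul_of_finrank_eq_one {K V : Type*} [Field K] [AddCommGroup V]
    [Module K V] [FiniteDimensional K V] (h : finrank K V = 1) (u v : V →ₗ[K] V) :
    trace K V (u * v) = trace K V u * trace K V v := by
  obtain ⟨c, rfl, -⟩ := u.existsUnique_eq_smul_id_of_finrank_eq_one h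
  obtain ⟨d, rfl, -⟩ := v.existsUnique_eq_smul_id_of_finrank_eq_one h
  simp [← Module.End.one_eq_id, h, mul_comm]

theorem Finset.sum_le_half_sum_sq {α : Type*} {s : Finset α} {f : α → ℝ}
    (hf : ∀ x ∈ s, 2 ≤ f x) : ∑ x ∈ s, f x ≤ (∑ x ∈ s, f x ^ 2) / 2 := by
  rw [Finset.sum_div]
  exact Finset.sum_le_sum fun x hx => by nlinarith [hf x hx]

namespace Representation

theorem character_eq_add_of_isCompl {k G V : Type*} [Field k] [Monoid G] [AddCommGroup V]
    [Module k V] [FiniteDimensional k V] {ρ : Representation k G V}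
    {W W' : Subrepresentation ρ} (h : IsCompl W W') (g : G) :
    ρ.character g = W.toRepresentation.character g + W'.toRepresentation.character g := by
  have hc : IsCompl W.toSubmodule W'.toSubmodule :=
    ⟨disjoint_iff.2 (by rw [← Subrepresentation.toSubmodule_inf, h.inf_eq_bot]; rfl),
      codisjoint_iff.2 (by rw [← Subrepresentation.toSubmodule_sup, h.sup_eq_top]; rfl)⟩
  let N : Bool → Submodule k V := fun b => bif b then W.toSubmodule else W'.toSubmodule
  have hN : DirectSum.IsInternal N :=
    (DirectSum.isInternal_submodule_iff_isCompl N (i := true) (j := false) (by decide)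
      (by ext b; cases b <;> simp)).2 hc
  have hmaps : ∀ b, Set.MapsTo (ρ g) (N b) (N b) := fun b => by
    cases b
    exacts [W'.apply_mem_toSubmodule g, W.apply_mem_toSubmodule g]
  rw [character, LinearMap.trace_eq_sum_trace_restrict hN hmaps, Fintype.sum_bool]
  rfl

variable {G : Type} [Group G] [Fintype G]

theorem character_leftRegular_one : (leftRegular ℂ G).character 1 = Nat.card G := by
  rw [char_one, Module.finrank_eq_card_basis (MonoidAlgebra.basis G ℂ), Nat.card_eq_fintype_card]

theorem character_leftRegular_of_ne_one {g : G} (hg : g ≠ 1) :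
    (leftRegular ℂ G).character g = 0 := by
  classical
  rw [character, LinearMap.trace_eq_matrix_trace ℂ (MonoidAlgebra.basis G ℂ), Matrix.trace]
  simp [LinearMap.toMatrix_apply, MonoidAlgebra.basis, hg]

theorem isIrrChar_character {V : Type} [AddCommGroup V] [Module ℂ V] [FiniteDimensional ℂ V]
    (ρ : Representation ℂ G V) [ρ.IsIrreducible] : IsIrrChar G ρ.character := by
  let := invertibleOfNonzero (NeZero.ne (Nat.card G : ℂ))
  have h := ρ.char_orthonormal ρ
  rw [if_pos ⟨Equiv.refl ρ⟩, inv_mul_eq_one₀ (NeZero.ne _)] at h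
  exact ⟨FDRep.of ρ, (FDRep.simple_iff_char_is_norm_one _).2 h.symm, rfl⟩

theorem exists_multiset_isIrrChar_sum_eq_character {V : Type} [AddCommGroup V] [Module ℂ V]
    [FiniteDimensional ℂ V] (ρ : Representation ℂ G V) :
    ∃ m : Multiset (G → ℂ), (∀ χ ∈ m, IsIrrChar G χ) ∧ m.sum = ρ.character := by
  induction h : finrank ℂ V using Nat.strong_induction_on generalizing V with
  | _ n ih =>
  rcases subsingleton_or_nontrivial V with hV | hV
  · refine ⟨0, by simp, funext fun g => ?_⟩
    simp [character, Subsingleton.elim (ρ g) 0]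
  have : Nontrivial (Subrepresentation ρ) :=
    ⟨⊥, ⊤, fun h => bot_ne_top (congrArg Subrepresentation.toSubmodule h)⟩
  by_cases hirr : ∀ W : Subrepresentation ρ, W = ⊥ ∨ W = ⊤
  · have : ρ.IsIrreducible := ⟨hirr⟩
    exact ⟨{ρ.character}, by simpa using ρ.isIrrChar_character, Multiset.sum_singleton _⟩
  push Not at hirr
  obtain ⟨W, hW_bot, hW_top⟩ := hirr
  -- Maschke's theorem
  obtain ⟨W', hWW'⟩ := exists_isCompl W
  have hW'_top : W' ≠ ⊤ := fun h => hW_bot (eq_bot_of_top_isCompl (h ▸ hWW'.symm))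
  have finrank_lt {U : Subrepresentation ρ} (hU : U ≠ ⊤) : finrank ℂ U.toSubmodule < n :=
    h ▸ Submodule.finrank_lt fun h => hU (Subrepresentation.toSubmodule_injective h)
  obtain ⟨m, hm, hm_sum⟩ := ih _ (finrank_lt hW_top) W.toRepresentation rfl
  obtain ⟨m', hm', hm'_sum⟩ := ih _ (finrank_lt hW'_top) W'.toRepresentation rfl
  refine ⟨m + m', by simpa [or_imp, forall_and] using ⟨hm, hm'⟩, funext fun g => ?_⟩
  rw [Multiset.sum_add, Pi.add_apply, hm_sum, hm'_sum, character_eq_add_of_isCompl hWW']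

end Representation

namespace FDRep

variable {G : Type} [Group G]

theorem simple_of_comp_surjective [Fintype G] {H : Type} [Group H] [Fintype H] (V : FDRep ℂ H)
    [Simple V] (f : G →* H) (hf : Function.Surjective f) : Simple (FDRep.of (V.ρ.comp f)) := by
  have hV := (simple_iff_char_is_norm_one V).1 ‹_›
  have hG : (Nat.card G : ℂ) = Nat.card f.ker • (Nat.card H : ℂ) := by
    simpa using f.sum_comp_of_surjective hf (fun _ => (1 : ℂ))
  rw [simple_iff_char_is_norm_one, hG, ← hV, ← f.sum_comp_of_surjective hf]
  refine Fintype.sum_congr _ _ fun g => ?_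
  rw [← map_inv]
  rfl

theorem character_mul_of_finrank_eq_one (V : FDRep ℂ G) (h : finrank ℂ V = 1) (g g' : G) :
    V.character (g * g') = V.character g * V.character g' := by
  rw [character, map_mul, LinearMap.trace_mul_of_finrank_eq_one h]
  rfl

theorem simple_of_finrank_eq_one [Fintype G] (V : FDRep ℂ G) (h : finrank ℂ V = 1) :
    Simple V := by
  rw [simple_iff_char_is_norm_one]
  simp [← character_mul_of_finrank_eq_one V h, h]

theorem commutator_le_ker_of_finrank_eq_one (V : FDRep ℂ G) (h : finrank ℂ V = 1) :
    commutator G ≤ V.ρ.ker := by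
  have hcomm (g g' : G) : V.ρ (g * g') = V.ρ (g' * g) := by
    obtain ⟨c, hc, -⟩ := (V.ρ g).existsUnique_eq_smul_id_of_finrank_eq_one h
    obtain ⟨d, hd, -⟩ := (V.ρ g').existsUnique_eq_smul_id_of_finrank_eq_one h
    rw [map_mul, map_mul, hc, hd, smul_mul_smul_comm, smul_mul_smul_comm, mul_comm]
  rw [commutator_eq_closure, Subgroup.closure_le]
  rintro _ ⟨g, g', rfl⟩
  rw [SetLike.mem_coe, MonoidHom.mem_ker, commutatorElement_def, mul_assoc, map_mul, hcomm,
    ← map_mul]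
  simp [mul_assoc]

end FDRep

variable {G : Type} [Group G]

theorem IsIrrChar.exists_apply_one_eq_natCast {χ : G → ℂ} (hχ : IsIrrChar G χ) :
    ∃ n : ℕ, 0 < n ∧ χ 1 = n := by
  obtain ⟨V, hV, rfl⟩ := hχ
  refine ⟨finrank ℂ V, Module.finrank_pos_iff.2 ?_, FDRep.char_one V⟩
  by_contra! hV_subsingleton
  exact id_nonzero V (by ext x; exact Subsingleton.elim _ _)

theorem IsIrrChar.comp_surjective [Fintype G] {H : Type} [Group H] [Fintype H] {ψ : H → ℂ}
    (hψ : IsIrrChar H ψ) (f : G →* H) (hf : Function.Surjective f) : IsIrrChar G (ψ ∘ f) := by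
  obtain ⟨V, hV, rfl⟩ := hψ
  exact ⟨FDRep.of (V.ρ.comp f), V.simple_of_comp_surjective f hf, rfl⟩

theorem IsIrrChar.exists_eq_comp_mk_of_apply_one_eq_one [Finite G] {N : Subgroup G} [N.Normal]
    (hN : N ≤ commutator G) {χ : G → ℂ} (hχ : IsIrrChar G χ) (h1 : χ 1 = 1) :
    ∃ ψ : G ⧸ N → ℂ, IsIrrChar (G ⧸ N) ψ ∧ χ = ψ ∘ QuotientGroup.mk := by
  obtain ⟨V, -, rfl⟩ := hχ
  have hV : finrank ℂ V = 1 := by exact_mod_cast (FDRep.char_one V).symm.trans h1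
  let ρ : Representation ℂ (G ⧸ N) V :=
    QuotientGroup.lift N V.ρ (hN.trans (V.commutator_le_ker_of_finrank_eq_one hV))
  have := Fintype.ofFinite (G ⧸ N)
  exact ⟨_, ⟨FDRep.of ρ, (FDRep.of ρ).simple_of_finrank_eq_one hV, rfl⟩, rfl⟩

theorem IsIrrChar.two_le_re_apply_one [Finite G] {N : Subgroup G} [N.Normal]
    (hN : N ≤ commutator G) {χ : G → ℂ} (hχ : IsIrrChar G χ)
    (h : ∀ ψ, IsIrrChar (G ⧸ N) ψ → χ ≠ ψ ∘ QuotientGroup.mk) : 2 ≤ (χ 1).re := by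
  obtain ⟨n, hn, hχ1⟩ := hχ.exists_apply_one_eq_natCast
  have hn1 : n ≠ 1 := by
    rintro rfl
    obtain ⟨ψ, hψ, hχψ⟩ := hχ.exists_eq_comp_mk_of_apply_one_eq_one hN (by simpa using hχ1)
    exact h ψ hψ hχψ
  rw [hχ1, Complex.natCast_re]
  exact_mod_cast (by omega : 2 ≤ n)

section Orthogonality

variable [Fintype G]

noncomputable def charPairing (ψ : G → ℂ) : (G → ℂ) →ₗ[ℂ] ℂ where
  toFun χ := (Nat.card G : ℂ)⁻¹ * ∑ g, χ g * ψ g⁻¹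
  map_add' χ χ' := by simp [add_mul, Finset.sum_add_distrib, mul_add]
  map_smul' c χ := by simp [Finset.mul_sum, mul_left_comm, mul_assoc]

theorem charPairing_apply (ψ χ : G → ℂ) :
    charPairing ψ χ = (Nat.card G : ℂ)⁻¹ * ∑ g, χ g * ψ g⁻¹ := rfl

open scoped Classical in
theorem charPairing_apply_of_isIrrChar {χ ψ : G → ℂ} (hχ : IsIrrChar G χ)
    (hψ : IsIrrChar G ψ) : charPairing ψ χ = if χ = ψ then 1 else 0 := by
  obtain ⟨V, hV, rfl⟩ := hχ
  obtain ⟨W, hW, rfl⟩ := hψ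
  let := invertibleOfNonzero (NeZero.ne (Nat.card G : ℂ))
  have hVV := FDRep.char_orthonormal V V
  rw [if_pos ⟨Iso.refl V⟩] at hVV
  have hVW := FDRep.char_orthonormal V W
  rw [charPairing_apply, hVW]
  refine if_congr ⟨fun ⟨i⟩ => FDRep.char_iso i, fun h => ?_⟩ rfl rfl
  by_contra hiso
  rw [if_neg hiso, ← h, hVV] at hVW
  exact one_ne_zero hVW

open scoped Classical in
theorem charPairing_multiset_sum {m : Multiset (G → ℂ)} (hm : ∀ χ ∈ m, IsIrrChar G χ)
    {ψ : G → ℂ} (hψ : IsIrrChar G ψ) : charPairing ψ m.sum = m.count ψ := by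
  induction m using Multiset.induction_on with
  | empty => simp
  | cons χ m ih =>
    rw [Multiset.sum_cons, map_add, ih fun χ' h => hm χ' (Multiset.mem_cons_of_mem h),
      charPairing_apply_of_isIrrChar (hm χ (Multiset.mem_cons_self χ m)) hψ, Multiset.count_cons]
    obtain rfl | h := eq_or_ne χ ψ
    · simp [add_comm]
    · simp [h, h.symm]

theorem charPairing_character_leftRegular (ψ : G → ℂ) :
    charPairing ψ (Representation.leftRegular ℂ G).character = ψ 1 := by
  rw [charPairing_apply, Fintype.sum_eq_single 1 fun g hg => by
    rw [Representation.character_leftRegular_of_ne_one hg, zero_mul],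
    Representation.character_leftRegular_one, inv_one, inv_mul_cancel_left₀ (NeZero.ne _)]

open scoped Classical in
theorem count_eq_apply_one_of_sum_eq_character_leftRegular {m : Multiset (G → ℂ)}
    (hm : ∀ χ ∈ m, IsIrrChar G χ) (hm_sum : m.sum = (Representation.leftRegular ℂ G).character)
    {ψ : G → ℂ} (hψ : IsIrrChar G ψ) : (m.count ψ : ℂ) = ψ 1 := by
  rw [← charPairing_multiset_sum hm hψ, hm_sum, charPairing_character_leftRegular]

theorem mem_of_sum_eq_character_leftRegular {m : Multiset (G → ℂ)}
    (hm : ∀ χ ∈ m, IsIrrChar G χ) (hm_sum : m.sum = (Representation.leftRegular ℂ G).character)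
    {ψ : G → ℂ} (hψ : IsIrrChar G ψ) : ψ ∈ m := by
  classical
  obtain ⟨n, hn, hψ1⟩ := hψ.exists_apply_one_eq_natCast
  have hcount := count_eq_apply_one_of_sum_eq_character_leftRegular hm hm_sum hψ
  rw [hψ1, Nat.cast_inj] at hcount
  rwa [← Multiset.count_pos, hcount]

end Orthogonality

section DegreeSums

variable (G) [Fintype G]

theorem isIrrChar_finite : {χ : G → ℂ | IsIrrChar G χ}.Finite := by
  classical
  obtain ⟨m, hm, hm_sum⟩ :=
    (Representation.leftRegular ℂ G).exists_multiset_isIrrChar_sum_eq_character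
  exact m.toFinset.finite_toSet.subset fun ψ hψ =>
    Multiset.mem_toFinset.2 (mem_of_sum_eq_character_leftRegular hm hm_sum hψ)

noncomputable def irrChars : Finset (G → ℂ) := (isIrrChar_finite G).toFinset

variable {G} in
theorem mem_irrChars {χ : G → ℂ} : χ ∈ irrChars G ↔ IsIrrChar G χ := Set.Finite.mem_toFinset _

theorem charDegSum_eq_sum : charDegSum G = ∑ χ ∈ irrChars G, (χ 1).re := by
  rw [charDegSum, ← Set.Finite.coe_toFinset (isIrrChar_finite G), finsum_mem_coe_finset]
  rfl

theorem character_leftRegular_eq_sum :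
    (Representation.leftRegular ℂ G).character = ∑ χ ∈ irrChars G, χ 1 • χ := by
  classical
  obtain ⟨m, hm, hm_sum⟩ :=
    (Representation.leftRegular ℂ G).exists_multiset_isIrrChar_sum_eq_character
  have hsupp : m.toFinset = irrChars G := by
    ext ψ
    rw [Multiset.mem_toFinset, mem_irrChars]
    exact ⟨hm ψ, mem_of_sum_eq_character_leftRegular hm hm_sum⟩
  rw [← hm_sum, Finset.sum_multiset_count, hsupp]
  refine Finset.sum_congr rfl fun χ hχ => ?_
  rw [← Nat.cast_smul_eq_nsmul ℂ,
    count_eq_apply_one_of_sum_eq_character_leftRegular hm hm_sum (mem_irrChars.1 hχ)]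

theorem sum_sq_re_apply_one : ∑ χ ∈ irrChars G, (χ 1).re ^ 2 = Nat.card G := by
  have h := congrFun (character_leftRegular_eq_sum G) 1
  rw [Representation.character_leftRegular_one, Finset.sum_apply] at h
  rw [← Complex.natCast_re, h, Complex.re_sum]
  refine Finset.sum_congr rfl fun χ hχ => ?_
  obtain ⟨n, -, hn⟩ := (mem_irrChars.1 hχ).exists_apply_one_eq_natCast
  simp [hn, sq]

end DegreeSums

theorem charDegSum_sub_charDegSum_quotient_le [Fintype G] {N : Subgroup G} [N.Normal]
    (hN : N ≤ commutator G) :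
    charDegSum G - charDegSum (G ⧸ N) ≤ ((Nat.card G : ℝ) - Nat.card (G ⧸ N)) / 2 := by
  let := Fintype.ofFinite (G ⧸ N)
  let inflate : (G ⧸ N → ℂ) ↪ (G → ℂ) :=
    ⟨(· ∘ QuotientGroup.mk), QuotientGroup.mk_surjective.injective_comp_right⟩
  set I := (irrChars (G ⧸ N)).map inflate
  have hI : I ⊆ irrChars G := Finset.map_subset_iff_subset_preimage.2 fun ψ hψ =>
    Finset.mem_preimage.2 <| mem_irrChars.2 <|
      (mem_irrChars.1 hψ).comp_surjective _ (QuotientGroup.mk'_surjective N)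
  have hsum_I (F : ℂ → ℝ) : ∑ χ ∈ I, F (χ 1) = ∑ ψ ∈ irrChars (G ⧸ N), F (ψ 1) :=
    Finset.sum_map _ _ _
  have hdeg : ∀ χ ∈ irrChars G \ I, 2 ≤ (χ 1).re := by
    intro χ hχ
    rw [Finset.mem_sdiff, mem_irrChars] at hχ
    exact hχ.1.two_le_re_apply_one hN fun ψ hψ h =>
      hχ.2 (Finset.mem_map.2 ⟨ψ, mem_irrChars.2 hψ, h.symm⟩)
  have h := Finset.sum_le_half_sum_sq hdeg
  rwa [Finset.sum_sdiff_eq_sub hI, Finset.sum_sdiff_eq_sub hI, hsum_I (·.re),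
    hsum_I (·.re ^ 2), sum_sq_re_apply_one, sum_sq_re_apply_one, ← charDegSum_eq_sum,
    ← charDegSum_eq_sum] at h

/-- If `N` is a normal subgroup of a finite group `G` contained in the derived subgroup
`G'` and `T(G) > (1/2)·|G|`, then `T(G/N) > (1/2)·|G/N|`. -/
theorem degree_sum_quotient (G : Type) [Group G] [Fintype G] (N : Subgroup G) [N.Normal]
    (hN : N ≤ commutator G) (h : charDegSum G > (1 / 2 : ℝ) * Nat.card G) :
    charDegSum (G ⧸ N) > (1 / 2 : ℝ) * Nat.card (G ⧸ N) := by
  linarith [charDegSum_sub_charDegSum_quotient_le hN]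
end
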